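/- For {i,j,k,h} = {1,2,3,4} and every l ∈ ℝ⁶ with all coordinates positive, the partial derivative of φ_ij with respect to the opposite-edge coordinate l_kh is ∂φ_ij/∂l_kh(l) = − s_ij² s_kh/(b_k b_h); in particular this partial derivative is strictly negative, so the gradient of φ_ij is nonvanishing at every point of the open octant {l ∈ ℝ⁶ : all l_rs > 0}. -/
import Mathlib


/-- `bfun l i j k` is the quantity `b_h = √(2 c_ij c_ik c_jk + c_ij² + c_ik² + c_jk² − 1)`
attached to the vertex `h` whose three opposite vertices are `i, j, k`
(where `c_rs = cosh l_rs`). -/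
noncomputable def bfun (l : Fin 4 → Fin 4 → ℝ) (i j k : Fin 4) : ℝ :=
  Real.sqrt (2 * Real.cosh (l i j) * Real.cosh (l i k) * Real.cosh (l j k) +
    Real.cosh (l i j) ^ 2 + Real.cosh (l i k) ^ 2 + Real.cosh (l j k) ^ 2 - 1)

/-- `φ_ij(l) = (c_ik c_ih + c_jk c_jh + c_ij c_ik c_jh + c_ij c_ih c_jk − s_ij² c_kh)/(b_k b_h)`,
where `{i,j,k,h} = {1,2,3,4}`, `c_rs = cosh l_rs`, `s_rs = sinh l_rs`,
`b_k = bfun l i j h` and `b_h = bfun l i j k`. -/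
noncomputable def phiE (l : Fin 4 → Fin 4 → ℝ) (i j k h : Fin 4) : ℝ :=
  (Real.cosh (l i k) * Real.cosh (l i h) + Real.cosh (l j k) * Real.cosh (l j h) +
    Real.cosh (l i j) * Real.cosh (l i k) * Real.cosh (l j h) +
    Real.cosh (l i j) * Real.cosh (l i h) * Real.cosh (l j k) -
    Real.sinh (l i j) ^ 2 * Real.cosh (l k h)) /
  (bfun l i j h * bfun l i j k)

/-- Varying the single symmetric coordinate `l_kh` of `l`, keeping the other
coordinates fixed. -/
def updKH (l : Fin 4 → Fin 4 → ℝ) (k h : Fin 4) (t : ℝ) : Fin 4 → Fin 4 → ℝ :=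
  fun r s => if (r = k ∧ s = h) ∨ (r = h ∧ s = k) then t else l r s

lemma bfun_pos (l : Fin 4 → Fin 4 → ℝ) (i j k : Fin 4) : 0 < bfun l i j k := by
  apply Real.sqrt_pos.mpr
  have h1 := Real.one_le_cosh (l i j)
  have h2 := Real.one_le_cosh (l i k)
  have h3 := Real.one_le_cosh (l j k)
  nlinarith [mul_le_mul (mul_le_mul h1 h2 zero_le_one (by linarith)) h3 zero_le_one
    (by positivity)]

theorem stmt14 (l : Fin 4 → Fin 4 → ℝ) (hsym : ∀ r s, l r s = l s r)
    (hpos : ∀ r s, r ≠ s → 0 < l r s)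
    (i j k h : Fin 4) (hij : i ≠ j) (hik : i ≠ k) (hih : i ≠ h)
    (hjk : j ≠ k) (hjh : j ≠ h) (hkh : k ≠ h) :
    HasDerivAt (fun t : ℝ => phiE (updKH l k h t) i j k h)
      (-(Real.sinh (l i j) ^ 2 * Real.sinh (l k h)) / (bfun l i j h * bfun l i j k))
      (l k h) ∧
    -(Real.sinh (l i j) ^ 2 * Real.sinh (l k h)) / (bfun l i j h * bfun l i j k) < 0 := by
  have hfun : (fun t : ℝ => phiE (updKH l k h t) i j k h) =
      fun t : ℝ =>
        ((Real.cosh (l i k) * Real.cosh (l i h) + Real.cosh (l j k) * Real.cosh (l j h) +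
          Real.cosh (l i j) * Real.cosh (l i k) * Real.cosh (l j h) +
          Real.cosh (l i j) * Real.cosh (l i h) * Real.cosh (l j k)) -
          Real.sinh (l i j) ^ 2 * Real.cosh t) /
        (bfun l i j h * bfun l i j k) := by
    funext t
    simp [phiE, bfun, updKH, hij, hik, hih, hjk, hjh, hkh]
  rw [hfun]
  constructor
  · have hd := (((Real.hasDerivAt_cosh (l k h)).const_mul
      (Real.sinh (l i j) ^ 2)).const_sub
      (Real.cosh (l i k) * Real.cosh (l i h) + Real.cosh (l j k) * Real.cosh (l j h) +
        Real.cosh (l i j) * Real.cosh (l i k) * Real.cosh (l j h) +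
        Real.cosh (l i j) * Real.cosh (l i h) * Real.cosh (l j k))).div_const
        (bfun l i j h * bfun l i j k)
    exact hd
  · apply div_neg_of_neg_of_pos
    · have h1 : 0 < Real.sinh (l i j) := Real.sinh_pos_iff.mpr (hpos _ _ hij)
      have h2 : 0 < Real.sinh (l k h) := Real.sinh_pos_iff.mpr (hpos _ _ hkh)
      have : 0 < Real.sinh (l i j) ^ 2 * Real.sinh (l k h) := by positivity
      linarith
    · exact mul_pos (bfun_pos l i j h) (bfun_pos l i j k)
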